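/- arXiv:2411.11732 — 5 statements merged into one kernel-verified Lean document; each statement's English description precedes it below -/
import Mathlib

section
/- Let A be the real 2×2 matrix A = [[6/5 − √2/2, −√2/2], [−1, 6/5]] and define g : ℝ² → ℝ by g(x) = xᵀA x = x ⋅ (A x). Then g is not convex on the box [0,1]² = {x ∈ ℝ² : 0 ≤ x₁ ≤ 1, 0 ≤ x₂ ≤ 1}; that is, there exist points u, v in [0,1]² and λ ∈ [0,1] with g(λu + (1−λ)v) > λ g(u) + (1−λ) g(v). -/
open Matrix

/-- The aggregate matrix arising from asynchronous sampling in Theorem 1 of the paper: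
the quadratic form `g x = xᵀ A x` is not convex on the box `[0,1]²`. -/
theorem stmt_0
    (A : Matrix (Fin 2) (Fin 2) ℝ)
    (hA : A = !![6/5 - Real.sqrt 2 / 2, -(Real.sqrt 2 / 2); -1, 6/5])
    (g : (Fin 2 → ℝ) → ℝ)
    (hg : ∀ x, g x = x ⬝ᵥ A.mulVec x) :
    ∃ u v : Fin 2 → ℝ, ∃ l : ℝ,
      (∀ i, 0 ≤ u i ∧ u i ≤ 1) ∧ (∀ i, 0 ≤ v i ∧ v i ≤ 1) ∧
      0 ≤ l ∧ l ≤ 1 ∧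
      g (l • u + (1 - l) • v) > l * g u + (1 - l) * g v := by
  refine ⟨![1,1], ![0,0], 1/2, ?_, ?_, by norm_num, by norm_num, ?_⟩
  · intro i; fin_cases i <;> norm_num
  · intro i; fin_cases i <;> norm_num
  · have hs : Real.sqrt 2 > 7/5 := by
      nlinarith [Real.sq_sqrt (by norm_num : (2:ℝ) ≥ 0), Real.sqrt_nonneg 2]
    simp only [hg, hA, mulVec, dotProduct, Fin.sum_univ_two]
    norm_num [Matrix.cons_val_zero, Matrix.cons_val_one]
    nlinarith [hs]
end

section
/- Let A be the real 2×2 matrix A = [[6/5 − √2/2, −√2/2], [−1, 6/5]]. Then there exists x ∈ ℝ² such that xᵀA x < 0. Equivalently, the symmetric part Q_s = ½(A + Aᵀ) of A has a negative eigenvalue, i.e., its quadratic form takes a negative value. -/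
open Matrix

/-- The aggregate matrix from Theorem 1 of the paper has an indefinite quadratic form:
there exists `x` with `xᵀ A x < 0` (equivalently, the symmetric part of `A` has a
negative eigenvalue). -/
theorem stmt_1
    (A : Matrix (Fin 2) (Fin 2) ℝ)
    (hA : A = !![6/5 - Real.sqrt 2 / 2, -(Real.sqrt 2 / 2); -1, 6/5]) :
    ∃ x : Fin 2 → ℝ, x ⬝ᵥ A.mulVec x < 0 := by
  refine ⟨![1, 1], ?_⟩
  subst hA
  have h : (7:ℝ)/5 < Real.sqrt 2 := by
    have : ((7:ℝ)/5)^2 < 2 := by norm_num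
    nlinarith [Real.sq_sqrt (by norm_num : (2:ℝ) ≥ 0), Real.sqrt_nonneg 2]
  simp [dotProduct, mulVec, Fin.sum_univ_two]
  nlinarith
end

section
/- Let K be a nonempty convex subset of a real inner product space E, let x ∈ K, let d ∈ E, and let γ > 0. Suppose p ∈ K satisfies ⟨(x − d) − p, z − p⟩ ≤ 0 for every z ∈ K (so p is the metric projection of x − d onto K), and suppose q ∈ K satisfies ⟨(x − γ d) − q, z − q⟩ ≤ 0 for every z ∈ K (so q is the metric projection of x − γ d onto K). Then ‖x − p‖ ≤ max{1, 1/γ} · ‖x − q‖. -/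
open scoped RealInnerProductSpace

/-- Lemma 3 of the paper: if `p` is the metric projection of `x - d` onto a convex set `K`
and `q` is the metric projection of `x - γ d` onto `K`, then
`‖x - p‖ ≤ max {1, 1/γ} ‖x - q‖`. -/
theorem stmt_3
    {E : Type*} [NormedAddCommGroup E] [InnerProductSpace ℝ E]
    (K : Set E) (hK : Convex ℝ K) (hKne : K.Nonempty)
    (x : E) (hx : x ∈ K) (d : E) (γ : ℝ) (hγ : 0 < γ)
    (p : E) (hpK : p ∈ K) (hp : ∀ z ∈ K, ⟪(x - d) - p, z - p⟫ ≤ 0)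
    (q : E) (hqK : q ∈ K) (hq : ∀ z ∈ K, ⟪(x - γ • d) - q, z - q⟫ ≤ 0) :
    ‖x - p‖ ≤ max 1 (1/γ) * ‖x - q‖ := by
  set a := x - p with ha
  set b := x - q with hb
  have h1 : ⟪a - d, a - b⟫ ≤ 0 := by
    have := hp q hqK
    have e1 : (x - d) - p = a - d := by rw [ha]; abel
    have e2 : q - p = a - b := by rw [ha, hb]; abel
    rwa [e1, e2] at this
  have h2 : ⟪b - γ • d, b - a⟫ ≤ 0 := by
    have := hq p hpK
    have e1 : (x - γ • d) - q = b - γ • d := by rw [hb]; abel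
    have e2 : p - q = b - a := by rw [ha, hb]; abel
    rwa [e1, e2] at this
  have h1' : ⟪a, a - b⟫ ≤ ⟪d, a - b⟫ := by
    have := h1
    rw [inner_sub_left] at this
    linarith
  have h2' : γ * ⟪d, a - b⟫ ≤ ⟪b, a - b⟫ := by
    have := h2
    rw [inner_sub_left, real_inner_smul_left] at this
    have e : (b - a) = -(a - b) := by abel
    rw [e, inner_neg_right, inner_neg_right] at this
    linarith
  have key : γ * ⟪a, a - b⟫ ≤ ⟪b, a - b⟫ := by
    calc γ * ⟪a, a - b⟫ ≤ γ * ⟪d, a - b⟫ := by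
          exact mul_le_mul_of_nonneg_left h1' hγ.le
      _ ≤ ⟪b, a - b⟫ := h2'
  have expand : γ * ‖a‖ ^ 2 + ‖b‖ ^ 2 ≤ (1 + γ) * ⟪a, b⟫ := by
    have e1 : ⟪a, a - b⟫ = ‖a‖ ^ 2 - ⟪a, b⟫ := by
      rw [inner_sub_right, real_inner_self_eq_norm_sq]
    have e2 : ⟪b, a - b⟫ = ⟪a, b⟫ - ‖b‖ ^ 2 := by
      rw [inner_sub_right, real_inner_self_eq_norm_sq, real_inner_comm b a]
    rw [e1, e2] at key
    nlinarith [key]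
  have cs : ⟪a, b⟫ ≤ ‖a‖ * ‖b‖ := real_inner_le_norm a b
  have quad : (γ * ‖a‖ - ‖b‖) * (‖a‖ - ‖b‖) ≤ 0 := by nlinarith
  have hbnn : (0:ℝ) ≤ ‖b‖ := norm_nonneg _
  have hann : (0:ℝ) ≤ ‖a‖ := norm_nonneg _
  rcases le_or_gt ‖a‖ ‖b‖ with h | h
  · calc ‖a‖ ≤ ‖b‖ := h
      _ = 1 * ‖b‖ := (one_mul _).symm
      _ ≤ max 1 (1/γ) * ‖b‖ := by
          exact mul_le_mul_of_nonneg_right (le_max_left _ _) hbnn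
  · have hg : γ * ‖a‖ ≤ ‖b‖ := by nlinarith
    have : ‖a‖ ≤ (1/γ) * ‖b‖ := by
      rw [div_mul_eq_mul_div, le_div_iff₀ hγ]
      linarith [hg]
    calc ‖a‖ ≤ (1/γ) * ‖b‖ := this
      _ ≤ max 1 (1/γ) * ‖b‖ :=
          mul_le_mul_of_nonneg_right (le_max_right _ _) hbnn
end

section
/- Let X = {x ∈ ℝⁿ : aᵢᵀx ≤ bᵢ for i = 1,…,m} be a nonempty compact polyhedral subset of ℝⁿ, let f(x) = xᵀQ x + rᵀx with Q ∈ ℝ^{n×n} and r ∈ ℝⁿ, let P : ℝⁿ → ℝⁿ be the metric projection onto X, and let X* = {x ∈ ℝⁿ : x = P(x − ∇f(x))} be the stationary set, where ∇f(x) = (Q + Qᵀ)x + r. Then there exists ε > 0 such that for all x*, y* ∈ X* with f(x*) ≠ f(y*), one has ‖x* − y*‖ ≥ ε. -/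
open Matrix
open scoped RealInnerProductSpace

/-- Convexity of a polyhedron. -/
lemma aux_conv {n m : ℕ} (a : Fin m → EuclideanSpace ℝ (Fin n)) (b : Fin m → ℝ)
    {X : Set (EuclideanSpace ℝ (Fin n))}
    (hX : X = {x | ∀ i, ⟪a i, x⟫ ≤ b i}) : Convex ℝ X := by
  rw [hX]
  intro x hx y hy s t hs ht hst i
  simp only [Set.mem_setOf_eq] at hx hy ⊢
  have h1 := hx i
  have h2 := hy i
  rw [inner_add_right, real_inner_smul_right, real_inner_smul_right]
  have h3 : s * b i + t * b i = b i := by rw [← add_mul, hst, one_mul]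
  have h4 := mul_le_mul_of_nonneg_left h1 hs
  have h5 := mul_le_mul_of_nonneg_left h2 ht
  linarith

/-- Variational inequality for metric projection onto a convex set. -/
lemma aux_vi {n : ℕ} {X : Set (EuclideanSpace ℝ (Fin n))} (hconv : Convex ℝ X)
    {P : EuclideanSpace ℝ (Fin n) → EuclideanSpace ℝ (Fin n)}
    (hP : ∀ u, P u ∈ X ∧ ∀ z ∈ X, ‖u - P u‖ ≤ ‖u - z‖)
    {x g : EuclideanSpace ℝ (Fin n)} (hx : x = P (x - g)) :
    ∀ z ∈ X, 0 ≤ ⟪g, z - x⟫ := by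
  intro z hz
  have hxX : x ∈ X := hx ▸ (hP (x - g)).1
  by_contra hc
  push_neg at hc
  set c : ℝ := ⟪g, z - x⟫ with hcdef
  set B : ℝ := ‖z - x‖ ^ 2 with hBdef
  have hBpos : 0 < B := by
    rcases eq_or_ne z x with h | h
    · exfalso
      have : c = 0 := by simp [hcdef, h]
      linarith
    · have hzx : z - x ≠ 0 := sub_ne_zero.mpr h
      exact pow_pos (norm_pos_iff.mpr hzx) 2
  set t : ℝ := min 1 (-c / B) with htdef
  have htpos : 0 < t := lt_min one_pos (div_pos (neg_pos.mpr hc) hBpos)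
  have ht1 : t ≤ 1 := min_le_left _ _
  have hzt : x + t • (z - x) ∈ X := by
    have h := hconv hxX hz (by linarith : (0:ℝ) ≤ 1 - t) htpos.le (by ring)
    convert h using 1
    module
  have key := (hP (x - g)).2 _ hzt
  rw [← hx] at key
  have h1 : x - g - x = -g := by abel
  have h2 : x - g - (x + t • (z - x)) = -(g + t • (z - x)) := by abel
  rw [h1, h2, norm_neg, norm_neg] at key
  have hsq : ‖g‖ ^ 2 ≤ ‖g + t • (z - x)‖ ^ 2 := by
    have := norm_nonneg g
    nlinarith
  rw [norm_add_sq_real, real_inner_smul_right, norm_smul, mul_pow, Real.norm_eq_abs,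
    sq_abs] at hsq
  have htB : t * B ≤ -c := by
    have h := min_le_right 1 (-c / B)
    calc t * B ≤ (-c / B) * B := by nlinarith
    _ = -c := by field_simp
  nlinarith [mul_le_mul_of_nonneg_left htB htpos.le, mul_pos htpos (neg_pos.mpr hc)]

/-- If `x` is a stationary point and `y ∈ X` has every constraint active at `x` also
active at `y`, then the gradient at `x` is orthogonal to `y - x`. -/
lemma aux_perp {n m : ℕ} (a : Fin m → EuclideanSpace ℝ (Fin n)) (b : Fin m → ℝ)
    {X : Set (EuclideanSpace ℝ (Fin n))}
    (hX : X = {x | ∀ i, ⟪a i, x⟫ ≤ b i})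
    {P : EuclideanSpace ℝ (Fin n) → EuclideanSpace ℝ (Fin n)}
    (hP : ∀ u, P u ∈ X ∧ ∀ z ∈ X, ‖u - P u‖ ≤ ‖u - z‖)
    {x y g : EuclideanSpace ℝ (Fin n)} (hx : x = P (x - g)) (hy : y ∈ X)
    (hact : ∀ i, ⟪a i, x⟫ = b i → ⟪a i, y⟫ = b i) :
    ⟪g, y - x⟫ = 0 := by
  have hconv := aux_conv a b hX
  have hvi := aux_vi hconv hP hx
  have hxX : x ∈ X := hx ▸ (hP (x - g)).1
  have hge : 0 ≤ ⟪g, y - x⟫ := hvi y hy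
  -- find small t > 0 with x + t • (x - y) ∈ X
  have hev : ∀ᶠ t : ℝ in nhdsWithin 0 (Set.Ioi 0), ∀ i, ⟪a i, x + t • (x - y)⟫ ≤ b i := by
    rw [Filter.eventually_all]
    intro i
    have hexp : ∀ t : ℝ, ⟪a i, x + t • (x - y)⟫ = ⟪a i, x⟫ + t * ⟪a i, x - y⟫ := by
      intro t; rw [inner_add_right, real_inner_smul_right]
    by_cases hia : ⟪a i, x⟫ = b i
    · have hiy : ⟪a i, y⟫ = b i := hact i hia
      have : ⟪a i, x - y⟫ = 0 := by rw [inner_sub_right, hia, hiy]; ring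
      filter_upwards with t
      rw [hexp, this, hia]; ring_nf; exact le_rfl
    · have hlt : ⟪a i, x⟫ < b i := lt_of_le_of_ne (by rw [hX] at hxX; exact hxX i) hia
      have htend : Filter.Tendsto (fun t : ℝ => ⟪a i, x⟫ + t * ⟪a i, x - y⟫)
          (nhdsWithin 0 (Set.Ioi 0)) (nhds (⟪a i, x⟫)) := by
        have hcont : Filter.Tendsto (fun t : ℝ => ⟪a i, x⟫ + t * ⟪a i, x - y⟫)
            (nhds 0) (nhds (⟪a i, x⟫ + 0 * ⟪a i, x - y⟫)) := by
          exact (continuous_const.add (continuous_id.mul continuous_const)).tendsto 0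
        rw [zero_mul, add_zero] at hcont
        exact hcont.mono_left nhdsWithin_le_nhds
      filter_upwards [htend.eventually_lt_const hlt] with t ht
      rw [hexp]; exact ht.le
  obtain ⟨t, ht, htmem⟩ := (hev.and eventually_mem_nhdsWithin).exists
  have htpos : 0 < t := Set.mem_Ioi.mp htmem
  have hzt : x + t • (x - y) ∈ X := by rw [hX]; exact ht
  have h0 := hvi _ hzt
  have heq : x + t • (x - y) - x = t • (x - y) := by abel
  rw [heq, real_inner_smul_right] at h0
  have h1 : 0 ≤ ⟪g, x - y⟫ := by
    by_contra hcc
    push_neg at hcc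
    nlinarith
  have h2 : ⟪g, y - x⟫ = -⟪g, x - y⟫ := by
    rw [show y - x = -(x - y) by abel, inner_neg_right]
  linarith

/-- Paper's Lemma 1 (after Luo–Tseng): stationary points of a quadratic program over a
nonempty compact polyhedron that have different objective values are uniformly separated. -/
theorem stmt_5
    {n m : ℕ}
    (a : Fin m → EuclideanSpace ℝ (Fin n)) (b : Fin m → ℝ)
    (X : Set (EuclideanSpace ℝ (Fin n)))
    (hX : X = {x | ∀ i, ⟪a i, x⟫ ≤ b i})
    (hXne : X.Nonempty) (hXcp : IsCompact X)
    (Q : Matrix (Fin n) (Fin n) ℝ) (r : EuclideanSpace ℝ (Fin n))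
    (f : EuclideanSpace ℝ (Fin n) → ℝ)
    (hf : ∀ x, f x = ⟪x, Matrix.toEuclideanLin Q x⟫ + ⟪r, x⟫)
    (gradf : EuclideanSpace ℝ (Fin n) → EuclideanSpace ℝ (Fin n))
    (hgradf : ∀ x, gradf x = Matrix.toEuclideanLin (Q + Qᵀ) x + r)
    (P : EuclideanSpace ℝ (Fin n) → EuclideanSpace ℝ (Fin n))
    (hP : ∀ u, P u ∈ X ∧ ∀ z ∈ X, ‖u - P u‖ ≤ ‖u - z‖)
    (Xstar : Set (EuclideanSpace ℝ (Fin n)))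
    (hXstar : Xstar = {x | x = P (x - gradf x)}) :
    ∃ ε > 0, ∀ xs ∈ Xstar, ∀ ys ∈ Xstar, f xs ≠ f ys → ε ≤ ‖xs - ys‖ := by
  classical
  set T := Matrix.toEuclideanLin Q with hT
  -- the transpose acts as the adjoint
  have hadj : ∀ u v : EuclideanSpace ℝ (Fin n),
      ⟪Matrix.toEuclideanLin Qᵀ u, v⟫ = ⟪u, T v⟫ := by
    intro u v
    have h1 : Qᵀ = Qᴴ := (Matrix.conjTranspose_eq_transpose_of_trivial Q).symm
    rw [h1, Matrix.toEuclideanLin_conjTranspose_eq_adjoint, LinearMap.adjoint_inner_left]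
  -- membership of stationary points in X
  have hmemX : ∀ x ∈ Xstar, x ∈ X := by
    intro x hx
    rw [hXstar, Set.mem_setOf_eq] at hx
    exact hx ▸ (hP (x - gradf x)).1
  -- quadratic expansion
  have quad : ∀ u v : EuclideanSpace ℝ (Fin n),
      f v - f u = ⟪gradf u, v - u⟫ + ⟪v - u, T (v - u)⟫ := by
    intro u v
    rw [hf, hf, hgradf]
    have hadd : Matrix.toEuclideanLin (Q + Qᵀ) u
        = T u + Matrix.toEuclideanLin Qᵀ u := by
      rw [map_add]; rfl
    rw [hadd, map_sub]
    simp only [inner_add_left, inner_sub_left, inner_sub_right]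
    linear_combination hadj u u - hadj u v + real_inner_comm (T u) v - real_inner_comm (T u) u
  -- stationary points with the same active set have the same value of f
  have key : ∀ x ∈ Xstar, ∀ y ∈ Xstar,
      (∀ i, ⟪a i, x⟫ = b i ↔ ⟪a i, y⟫ = b i) → f x = f y := by
    intro x hx y hy hiff
    have hxs : x = P (x - gradf x) := by rw [hXstar, Set.mem_setOf_eq] at hx; exact hx
    have hys : y = P (y - gradf y) := by rw [hXstar, Set.mem_setOf_eq] at hy; exact hy
    have hp1 : ⟪gradf x, y - x⟫ = 0 :=
      aux_perp a b hX hP hxs (hmemX y hy) (fun i h => (hiff i).mp h)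
    have hp2 : ⟪gradf y, x - y⟫ = 0 :=
      aux_perp a b hX hP hys (hmemX x hx) (fun i h => (hiff i).mpr h)
    have q1 := quad x y
    have q2 := quad y x
    rw [hp1] at q1
    rw [hp2] at q2
    have hqq : ⟪x - y, T (x - y)⟫ = ⟪y - x, T (y - x)⟫ := by
      rw [show x - y = -(y - x) by abel, map_neg, inner_neg_neg]
    rw [hqq] at q2
    linarith
  -- f takes finitely many values on Xstar
  have hfin : (f '' Xstar).Finite := by
    set A : EuclideanSpace ℝ (Fin n) → Set (Fin m) := fun x => {i | ⟪a i, x⟫ = b i} with hA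
    have hsub : f '' Xstar ⊆
        (fun S : Set (Fin m) =>
          if h : ∃ x, x ∈ Xstar ∧ A x = S then f h.choose else 0) '' Set.univ := by
      rintro v ⟨x, hx, rfl⟩
      refine ⟨A x, Set.mem_univ _, ?_⟩
      have hex : ∃ z, z ∈ Xstar ∧ A z = A x := ⟨x, hx, rfl⟩
      simp only [dif_pos hex]
      obtain ⟨hz1, hz2⟩ := hex.choose_spec
      refine key _ hz1 _ hx fun i => ?_
      have := Set.ext_iff.mp hz2 i
      simpa [hA] using this
    exact (Set.finite_univ.image _).subset hsub
  -- trivial case: f constant on Xstar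
  by_cases htriv : ∀ x ∈ Xstar, ∀ y ∈ Xstar, f x = f y
  · exact ⟨1, one_pos, fun xs hxs ys hys hne => absurd (htriv _ hxs _ hys) hne⟩
  push_neg at htriv
  obtain ⟨x0, hx0, y0, hy0, hne0⟩ := htriv
  -- minimal gap between distinct values
  set G : Set ℝ := {d | ∃ u ∈ f '' Xstar, ∃ v ∈ f '' Xstar, u ≠ v ∧ d = |u - v|} with hG
  have hGfin : G.Finite := by
    have hsub : G ⊆ (fun p : ℝ × ℝ => |p.1 - p.2|) '' ((f '' Xstar) ×ˢ (f '' Xstar)) := by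
      rintro d ⟨u, hu, v, hv, hne, rfl⟩
      exact ⟨(u, v), ⟨hu, hv⟩, rfl⟩
    exact ((hfin.prod hfin).image _).subset hsub
  have hGne : G.Nonempty :=
    ⟨|f x0 - f y0|, f x0, ⟨x0, hx0, rfl⟩, f y0, ⟨y0, hy0, rfl⟩, hne0, rfl⟩
  obtain ⟨δ, hδG, hδmin⟩ := Set.exists_min_image G id hGfin hGne
  have hδpos : 0 < δ := by
    obtain ⟨u, _, v, _, hne, rfl⟩ := hδG
    exact abs_pos.mpr (sub_ne_zero.mpr hne)
  -- uniform continuity of f on X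
  have hfc : Continuous f := by
    have hcont : Continuous fun x : EuclideanSpace ℝ (Fin n) => ⟪x, T x⟫ + ⟪r, x⟫ := by
      have h1 : Continuous fun x : EuclideanSpace ℝ (Fin n) => T x :=
        T.continuous_of_finiteDimensional
      exact (continuous_id.inner h1).add (continuous_const.inner continuous_id)
    have : f = fun x => ⟪x, T x⟫ + ⟪r, x⟫ := funext hf
    rw [this]; exact hcont
  obtain ⟨ε, hεpos, hε⟩ :=
    Metric.uniformContinuousOn_iff.mp
      (hXcp.uniformContinuousOn_of_continuous hfc.continuousOn) δ hδpos
  refine ⟨ε, hεpos, fun xs hxs ys hys hne => ?_⟩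
  by_contra hlt
  push_neg at hlt
  have hd : dist (f xs) (f ys) < δ :=
    hε xs (hmemX xs hxs) ys (hmemX ys hys) (by rwa [dist_eq_norm])
  have hin : |f xs - f ys| ∈ G :=
    ⟨f xs, ⟨xs, hxs, rfl⟩, f ys, ⟨ys, hys, rfl⟩, hne, rfl⟩
  have := hδmin _ hin
  rw [Real.dist_eq] at hd
  simp only [id] at this
  linarith
end

section
/- Let D, E, F, G > 0. There exists γ̄ ∈ (0, 1), depending only on D, E, F, G, such that for every γ ∈ (0, γ̄) there exists ρ ∈ (0, 1) with the following property: for all sequences α, β : ℕ → ℝ with α(k) ≥ 0 and β(k) ≥ 0 for all k, satisfying for every k ∈ ℕ both α(k+1) ≤ α(k) − γ⁻¹·D·β(k+1) + E·β(k) and α(k+1) ≤ γ⁻²·F·β(k+1) + γ⁻¹·G·β(k), there exists C ≥ 0 such that α(k) ≤ C·ρᵏ and β(k) ≤ C·ρᵏ for all k ∈ ℕ. -/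
set_option maxHeartbeats 1600000 in
/-- Abstract linear-convergence recursion (paper's Lemma on linear convergence): for
positive constants `D, E, F, G` there is a step-size threshold `γ̄ ∈ (0,1)` such that for
every `γ ∈ (0, γ̄)` there is a rate `ρ ∈ (0,1)` forcing geometric decay of any nonnegative
sequences `α, β` satisfying the two coupled inequalities. -/
theorem stmt_10
    (D E F G : ℝ) (hD : 0 < D) (hE : 0 < E) (hF : 0 < F) (hG : 0 < G) :
    ∃ γbar : ℝ, γbar ∈ Set.Ioo (0:ℝ) 1 ∧
      ∀ γ ∈ Set.Ioo (0:ℝ) γbar,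
        ∃ ρ ∈ Set.Ioo (0:ℝ) 1,
          ∀ α β : ℕ → ℝ,
            (∀ k, 0 ≤ α k) → (∀ k, 0 ≤ β k) →
            (∀ k, α (k+1) ≤ α k - γ⁻¹ * D * β (k+1) + E * β k) →
            (∀ k, α (k+1) ≤ γ⁻¹^2 * F * β (k+1) + γ⁻¹ * G * β k) →
            ∃ C : ℝ, 0 ≤ C ∧ ∀ k, α k ≤ C * ρ^k ∧ β k ≤ C * ρ^k := by
  set c : ℝ := E + D * G / (2 * F) with hc
  have hcpos : 0 < c := by positivity
  set amax : ℝ := 1 + D / (2 * F) with hamax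
  have hamaxpos : (1:ℝ) < amax := by
    have h : 0 < D / (2 * F) := by positivity
    rw [hamax]; linarith
  refine ⟨min (1/2) (D / (2 * c * amax)), ⟨?_, ?_⟩, ?_⟩
  · apply lt_min
    · norm_num
    · positivity
  · calc min (1/2) (D / (2 * c * amax)) ≤ 1/2 := min_le_left _ _
      _ < 1 := by norm_num
  intro γ hγ
  obtain ⟨hγ0, hγlt⟩ := hγ
  have hγhalf : γ < 1/2 := lt_of_lt_of_le hγlt (min_le_left _ _)
  have hγD : γ < D / (2 * c * amax) := lt_of_lt_of_le hγlt (min_le_right _ _)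
  have hγne : γ ≠ 0 := ne_of_gt hγ0
  set a : ℝ := 1 + γ * D / (2 * F) with ha
  have ha1 : 1 < a := by
    have h : 0 < γ * D / (2 * F) := by positivity
    rw [ha]; linarith
  have ha0 : 0 < a := by linarith
  set b : ℝ := D / (2 * γ) with hb
  have hbpos : 0 < b := by positivity
  refine ⟨1/a, ⟨by positivity, by rw [div_lt_one ha0]; exact ha1⟩, ?_⟩
  intro α β hα hβ h1 h2
  -- c ≤ b / a
  have hm : c ≤ b / a := by
    have haamax : a ≤ amax := by
      rw [ha, hamax]
      have h1 : γ * D / (2 * F) ≤ D / (2 * F) := by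
        gcongr
        nlinarith
      linarith
    have h2γ : γ * (2 * c * amax) < D :=
      (lt_div_iff₀ (by positivity : (0:ℝ) < 2 * c * amax)).mp hγD
    rw [le_div_iff₀ ha0, hb, le_div_iff₀ (by positivity : (0:ℝ) < 2 * γ)]
    nlinarith [mul_le_mul_of_nonneg_right haamax (by positivity : (0:ℝ) ≤ 2 * γ * c)]
  -- key inequality
  have key : ∀ k, a * α (k+1) + b * β (k+1) ≤ α k + c * β k := by
    intro k
    have H1 := h1 k
    have H2 := h2 k
    have hinv : γ * γ⁻¹ = 1 := mul_inv_cancel₀ hγne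
    have H2' : γ * D / (2 * F) * α (k+1) ≤ b * β (k+1) + D * G / (2 * F) * β k := by
      have hco : (0:ℝ) ≤ γ * D / (2 * F) := by positivity
      have h := mul_le_mul_of_nonneg_left H2 hco
      have e1 : γ * D / (2 * F) * (γ⁻¹ ^ 2 * F * β (k+1)) = b * β (k+1) := by
        rw [hb]; field_simp
      have e2 : γ * D / (2 * F) * (γ⁻¹ * G * β k) = D * G / (2 * F) * β k := by
        field_simp
      calc γ * D / (2 * F) * α (k+1)
          ≤ γ * D / (2 * F) * (γ⁻¹ ^ 2 * F * β (k+1) + γ⁻¹ * G * β k) := h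
        _ = b * β (k+1) + D * G / (2 * F) * β k := by rw [mul_add, e1, e2]
    have hinv2 : γ⁻¹ * D * β (k+1) = 2 * b * β (k+1) := by
      rw [hb]; field_simp
    rw [hinv2] at H1
    rw [ha, hc]
    nlinarith [H1, H2']
  -- Lyapunov decay
  set m : ℝ := b / a with hmdef
  have hmpos : 0 < m := by positivity
  have ham : a * m = b := by rw [hmdef]; field_simp
  clear_value c amax a b m
  have hdec : ∀ k, α (k+1) + m * β (k+1) ≤ (1/a) * (α k + m * β k) := by
    intro k
    have hk := key k
    have h3 : c * β k ≤ m * β k := mul_le_mul_of_nonneg_right hm (hβ k)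
    rw [show (1/a) * (α k + m * β k) = (α k + m * β k) / a by ring,
      le_div_iff₀ ha0]
    have e : (α (k+1) + m * β (k+1)) * a = a * α (k+1) + b * β (k+1) := by
      rw [← ham]; ring
    rw [e]
    linarith
  have hgeom : ∀ k, α k + m * β k ≤ (α 0 + m * β 0) * (1/a)^k := by
    intro k
    induction k with
    | zero => simp
    | succ n ih =>
      calc α (n+1) + m * β (n+1) ≤ (1/a) * (α n + m * β n) := hdec n
        _ ≤ (1/a) * ((α 0 + m * β 0) * (1/a)^n) :=
            mul_le_mul_of_nonneg_left ih (by positivity)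
        _ = (α 0 + m * β 0) * (1/a)^(n+1) := by ring
  have hV0 : 0 ≤ α 0 + m * β 0 := by
    have := hα 0; have := hβ 0; positivity
  refine ⟨(α 0 + m * β 0) * (1 + 1/m), by positivity, ?_⟩
  intro k
  have hVk := hgeom k
  have hρnn : (0:ℝ) ≤ (1/a)^k := by positivity
  have hC : (α 0 + m * β 0) * (1/a)^k ≤ (α 0 + m * β 0) * (1 + 1/m) * (1/a)^k := by
    nlinarith [mul_nonneg hV0 hρnn, hmpos, one_div_pos.mpr hmpos]
  constructor
  · have h4 : α k ≤ α k + m * β k := by nlinarith [hβ k, hmpos]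
    calc α k ≤ (α 0 + m * β 0) * (1/a)^k := h4.trans hVk
      _ ≤ _ := hC
  · have h4 : β k ≤ (1/m) * (α k + m * β k) := by
      have hβk := hβ k
      have hαk := hα k
      rw [mul_add, show (1/m) * (m * β k) = β k by
        rw [← mul_assoc, one_div_mul_cancel hmpos.ne', one_mul]]
      have h5 : 0 ≤ (1/m) * α k :=
        mul_nonneg (le_of_lt (one_div_pos.mpr hmpos)) hαk
      linarith
    calc β k ≤ (1/m) * (α k + m * β k) := h4
      _ ≤ (1/m) * ((α 0 + m * β 0) * (1/a)^k) :=
          mul_le_mul_of_nonneg_left hVk (by positivity)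
      _ ≤ _ := by
          rw [show (α 0 + m * β 0) * (1 + 1/m) * (1/a)^k
              = (1 + 1/m) * ((α 0 + m * β 0) * (1/a)^k) by ring]
          have h6 := mul_nonneg hV0 hρnn
          nlinarith [h6, one_div_pos.mpr hmpos]
end
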